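/- arXiv:0911.3719 — 2 statements merged into one kernel-verified Lean document; each statement's English description precedes it below -/
import Mathlib

section
/- Let H be a Hopf algebra and α a convolution-invertible two-cocycle on H. Let L = ᵅHᵅ⁻¹ be the cocycle deformation of H (same coalgebra, product x*y = α(x₁,y₁)x₂y₂α⁻¹(x₃,y₃)). Then inside S(t_H)_Θ the generic base algebras coincide: B_H^α = B_L^ε. Concretely, σ_α(x,y) = σ_ε(x₁,y₁)α(x₂,y₂) and σ_α⁻¹(x,y) = α⁻¹(x₁,y₁)σ_ε⁻¹(x₂,y₂) for all x,y ∈ H, where σ_ε(x,y) = t_{x₁}t_{y₁}t⁻¹_{x₂*y₂}. -/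
open TensorProduct

noncomputable section

variable (k : Type) [Field k]

/-- Convolution product of two linear maps from a coalgebra to an algebra. -/
def conv {C A : Type} [AddCommGroup C] [Module k C] [Coalgebra k C]
    [Ring A] [Algebra k A] (f g : C →ₗ[k] A) : C →ₗ[k] A :=
  LinearMap.mul' k A ∘ₗ TensorProduct.map f g ∘ₗ Coalgebra.comul

/-- Unit of the convolution algebra: `unit ∘ counit`. -/
def convOne {C A : Type} [AddCommGroup C] [Module k C] [Coalgebra k C]
    [Ring A] [Algebra k A] : C →ₗ[k] A :=
  Algebra.linearMap k A ∘ₗ Coalgebra.counit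

section CocycleDefs

variable {H : Type} [Ring H] [HopfAlgebra k H]

/-- The two-cocycle condition `β(x₁,y₁) β(x₂y₂,z) = β(y₁,z₁) β(x,y₂z₂)` for an `A`-valued
bilinear form `β` on `H`, as an equality of linear maps on `(H ⊗ H) ⊗ H`. -/
def IsCocycle {A : Type} [CommRing A] [Algebra k A] (β : H ⊗[k] H →ₗ[k] A) : Prop :=
  conv k (LinearMap.mul' k A ∘ₗ TensorProduct.map β (convOne k))
      (β ∘ₗ TensorProduct.map (LinearMap.mul' k H) LinearMap.id)
  = conv k
      (LinearMap.mul' k A ∘ₗ TensorProduct.map (convOne k) β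
        ∘ₗ (TensorProduct.assoc k H H H).toLinearMap)
      (β ∘ₗ TensorProduct.map LinearMap.id (LinearMap.mul' k H)
        ∘ₗ (TensorProduct.assoc k H H H).toLinearMap)

/-- `β` and `βinv` are mutually inverse for the convolution product. -/
def IsConvInverse {A : Type} [CommRing A] [Algebra k A]
    (β βinv : H ⊗[k] H →ₗ[k] A) : Prop :=
  conv k β βinv = convOne k ∧ conv k βinv β = convOne k

end CocycleDefs

variable (C : Type) [AddCommGroup C] [Module k C] [Coalgebra k C]

/-- A model of Takeuchi's free commutative Hopf algebra `S(t_C)_Θ` generated by the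
coalgebra `C`, together with its generators `t_x` and `t⁻¹_x`. -/
structure TakData (T : Type) [CommRing T] [HopfAlgebra k T] where
  t : C →ₗ[k] T
  tinv : C →ₗ[k] T
  comul_t : Coalgebra.comul ∘ₗ t = TensorProduct.map t t ∘ₗ Coalgebra.comul
  counit_t : Coalgebra.counit ∘ₗ t = Coalgebra.counit
  comul_tinv : Coalgebra.comul ∘ₗ tinv
    = TensorProduct.map tinv tinv ∘ₗ (TensorProduct.comm k C C).toLinearMap ∘ₗ Coalgebra.comul
  counit_tinv : Coalgebra.counit ∘ₗ tinv = Coalgebra.counit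
  conv_t_tinv : conv k t tinv = convOne k
  conv_tinv_t : conv k tinv t = convOne k
  antipode_t : HopfAlgebra.antipode (R := k) ∘ₗ t = tinv
  antipode_tinv : HopfAlgebra.antipode (R := k) ∘ₗ tinv = t
  adjoin_eq_top : Algebra.adjoin k (Set.range ⇑t ∪ Set.range ⇑tinv) = ⊤

namespace TakData

variable {k C} {H : Type} [Ring H] [HopfAlgebra k H]
variable {T : Type} [CommRing T] [HopfAlgebra k T] (D : TakData k H T)

/-- `x ⊗ y ↦ t_x t_y`. -/
def tt : H ⊗[k] H →ₗ[k] T := LinearMap.mul' k T ∘ₗ TensorProduct.map D.t D.t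

/-- `x ⊗ y ↦ t⁻¹_{xy}`. -/
def tinvMul : H ⊗[k] H →ₗ[k] T := D.tinv ∘ₗ LinearMap.mul' k H

/-- `x ⊗ y ↦ t_{xy}`. -/
def tMul : H ⊗[k] H →ₗ[k] T := D.t ∘ₗ LinearMap.mul' k H

/-- `x ⊗ y ↦ t⁻¹_x t⁻¹_y`. -/
def tinvtinv : H ⊗[k] H →ₗ[k] T := LinearMap.mul' k T ∘ₗ TensorProduct.map D.tinv D.tinv

/-- The generic cocycle for the trivial cocycle: `σ(x,y) = t_{x₁} t_{y₁} t⁻¹_{x₂y₂}`. -/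
def sigmaEps : H ⊗[k] H →ₗ[k] T := conv k D.tt D.tinvMul

/-- Its convolution inverse: `σ⁻¹(x,y) = t_{x₁y₁} t⁻¹_{x₂} t⁻¹_{y₂}`. -/
def sigmaEpsInv : H ⊗[k] H →ₗ[k] T := conv k D.tMul D.tinvtinv

/-- The generic cocycle attached to `α`: `σ_α(x,y) = t_{x₁} t_{y₁} α(x₂,y₂) t⁻¹_{x₃y₃}`. -/
def sigma (α : H ⊗[k] H →ₗ[k] k) : H ⊗[k] H →ₗ[k] T :=
  conv k (conv k D.tt (Algebra.linearMap k T ∘ₗ α)) D.tinvMul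

/-- The inverse generic cocycle: `σ_α⁻¹(x,y) = t_{x₁y₁} α⁻¹(x₂,y₂) t⁻¹_{x₃} t⁻¹_{y₃}`. -/
def sigmaInv (αinv : H ⊗[k] H →ₗ[k] k) : H ⊗[k] H →ₗ[k] T :=
  conv k (conv k D.tMul (Algebra.linearMap k T ∘ₗ αinv)) D.tinvtinv

/-- The generic base algebra `B_H^α`: the subalgebra of `S(t_H)_Θ` generated by the values
of the generic cocycle `σ_α` and of its inverse. -/
def genBase (α αinv : H ⊗[k] H →ₗ[k] k) : Subalgebra k T :=
  Algebra.adjoin k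
    (Set.range (fun p : H × H => D.sigma α (p.1 ⊗ₜ[k] p.2)) ∪
      Set.range (fun p : H × H => D.sigmaInv αinv (p.1 ⊗ₜ[k] p.2)))

/-- The generic base algebra `B_H` for the trivial cocycle. -/
def B : Subalgebra k T :=
  Algebra.adjoin k
    (Set.range (fun p : H × H => D.sigmaEps (p.1 ⊗ₜ[k] p.2)) ∪
      Set.range (fun p : H × H => D.sigmaEpsInv (p.1 ⊗ₜ[k] p.2)))

end TakData

section ConvAux

variable {k}
variable {C A : Type} [AddCommGroup C] [Module k C] [Coalgebra k C]
  [Ring A] [Algebra k A]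

/-- `c ↦ s(c₂) c₁`. -/
def contrR (s : C →ₗ[k] k) : C →ₗ[k] C :=
  (TensorProduct.rid k C).toLinearMap ∘ₗ TensorProduct.map LinearMap.id s ∘ₗ Coalgebra.comul

/-- `c ↦ s(c₁) c₂`. -/
def contrL (s : C →ₗ[k] k) : C →ₗ[k] C :=
  (TensorProduct.lid k C).toLinearMap ∘ₗ TensorProduct.map s LinearMap.id ∘ₗ Coalgebra.comul

lemma conv_iota_right (f : C →ₗ[k] A) (s : C →ₗ[k] k) :
    conv k f (Algebra.linearMap k A ∘ₗ s) = f ∘ₗ contrR s := by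
  have key : LinearMap.mul' k A ∘ₗ TensorProduct.map f (Algebra.linearMap k A ∘ₗ s)
      = f ∘ₗ (TensorProduct.rid k C).toLinearMap ∘ₗ TensorProduct.map LinearMap.id s := by
    apply TensorProduct.ext'
    intro x y
    simp [Algebra.smul_def, Algebra.commutes]
  ext c
  have := LinearMap.congr_fun key (Coalgebra.comul c)
  simpa [conv, contrR] using this

lemma conv_iota_left (f : C →ₗ[k] A) (s : C →ₗ[k] k) :
    conv k (Algebra.linearMap k A ∘ₗ s) f = f ∘ₗ contrL s := by
  have key : LinearMap.mul' k A ∘ₗ TensorProduct.map (Algebra.linearMap k A ∘ₗ s) f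
      = f ∘ₗ (TensorProduct.lid k C).toLinearMap ∘ₗ TensorProduct.map s LinearMap.id := by
    apply TensorProduct.ext'
    intro x y
    simp [Algebra.smul_def]
  ext c
  have := LinearMap.congr_fun key (Coalgebra.comul c)
  simpa [conv, contrL] using this

lemma contrR_counit : contrR (Coalgebra.counit : C →ₗ[k] k) = LinearMap.id := by
  ext c
  have h : (TensorProduct.map (LinearMap.id : C →ₗ[k] C) Coalgebra.counit)
      (Coalgebra.comul c) = c ⊗ₜ[k] (1 : k) :=
    Coalgebra.lTensor_counit_comul (R := k) c
  simp [contrR, h]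

lemma contrL_counit : contrL (Coalgebra.counit : C →ₗ[k] k) = LinearMap.id := by
  ext c
  have h : (TensorProduct.map Coalgebra.counit (LinearMap.id : C →ₗ[k] C))
      (Coalgebra.comul c) = (1 : k) ⊗ₜ[k] c :=
    Coalgebra.rTensor_counit_comul (R := k) c
  simp [contrL, h]

lemma conv_one (f : C →ₗ[k] A) : conv k f (convOne k) = f := by
  have h : (convOne k : C →ₗ[k] A) = Algebra.linearMap k A ∘ₗ Coalgebra.counit := rfl
  rw [h, conv_iota_right, contrR_counit, LinearMap.comp_id]

lemma one_conv (f : C →ₗ[k] A) : conv k (convOne k) f = f := by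
  have h : (convOne k : C →ₗ[k] A) = Algebra.linearMap k A ∘ₗ Coalgebra.counit := rfl
  rw [h, conv_iota_left, contrL_counit, LinearMap.comp_id]

lemma conv_scalar (s s' : C →ₗ[k] k) : conv k s s' = s' ∘ₗ contrL s := by
  have hk : Algebra.linearMap k k ∘ₗ s = s := by ext c; simp
  conv_lhs => rw [← hk]
  rw [conv_iota_left]

lemma iota_conv_iota (s s' : C →ₗ[k] k) :
    conv k (Algebra.linearMap k A ∘ₗ s) (Algebra.linearMap k A ∘ₗ s')
      = Algebra.linearMap k A ∘ₗ conv k s s' := by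
  rw [conv_iota_left, conv_scalar, LinearMap.comp_assoc]

lemma iota_convOne :
    Algebra.linearMap k A ∘ₗ (convOne k : C →ₗ[k] k) = (convOne k : C →ₗ[k] A) := by
  ext c; simp [convOne]

lemma conv_assoc (f g h : C →ₗ[k] A) :
    conv k (conv k f g) h = conv k f (conv k g h) := by
  have h1 : TensorProduct.map (LinearMap.mul' k A ∘ₗ TensorProduct.map f g ∘ₗ Coalgebra.comul) h
      = TensorProduct.map (LinearMap.mul' k A) LinearMap.id
        ∘ₗ TensorProduct.map (TensorProduct.map f g) h
        ∘ₗ TensorProduct.map Coalgebra.comul LinearMap.id := by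
    rw [← TensorProduct.map_comp, ← TensorProduct.map_comp]
    simp
  have h2 : TensorProduct.map f (LinearMap.mul' k A ∘ₗ TensorProduct.map g h ∘ₗ Coalgebra.comul)
      = TensorProduct.map LinearMap.id (LinearMap.mul' k A)
        ∘ₗ TensorProduct.map f (TensorProduct.map g h)
        ∘ₗ TensorProduct.map LinearMap.id Coalgebra.comul := by
    rw [← TensorProduct.map_comp, ← TensorProduct.map_comp]
    simp
  have h3 : (LinearMap.mul' k A) ∘ₗ TensorProduct.map (LinearMap.mul' k A) LinearMap.id
      = ((LinearMap.mul' k A) ∘ₗ TensorProduct.map LinearMap.id (LinearMap.mul' k A))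
          ∘ₗ (TensorProduct.assoc k A A A).toLinearMap := by
    apply TensorProduct.ext_threefold
    intro a b c
    simp [mul_assoc]
  have h4 : (TensorProduct.assoc k C C C).toLinearMap
        ∘ₗ TensorProduct.map Coalgebra.comul LinearMap.id ∘ₗ Coalgebra.comul
      = TensorProduct.map LinearMap.id Coalgebra.comul ∘ₗ Coalgebra.comul := by
    exact Coalgebra.coassoc (R := k) (A := C)
  ext c
  simp only [conv, LinearMap.comp_apply]
  rw [LinearMap.congr_fun h1 (Coalgebra.comul c), LinearMap.congr_fun h2 (Coalgebra.comul c)]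
  simp only [LinearMap.comp_apply]
  have H3 := LinearMap.congr_fun h3
    ((TensorProduct.map (TensorProduct.map f g) h)
      ((TensorProduct.map Coalgebra.comul LinearMap.id) (Coalgebra.comul c)))
  simp only [LinearMap.comp_apply, LinearEquiv.coe_coe] at H3
  rw [H3, ← TensorProduct.map_map_assoc f g h]
  have H4 := LinearMap.congr_fun h4 c
  simp only [LinearMap.comp_apply, LinearEquiv.coe_coe] at H4
  rw [H4]

end ConvAux

section MemAux

variable {k} {M N T : Type} [AddCommGroup M] [Module k M] [AddCommGroup N] [Module k N]
  [CommRing T] [Algebra k T]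

lemma apply_mem_of_tmul_mem (f : M ⊗[k] N →ₗ[k] T) (S : Subalgebra k T)
    (hf : ∀ x y, f (x ⊗ₜ[k] y) ∈ S) (w : M ⊗[k] N) : f w ∈ S := by
  induction w using TensorProduct.induction_on with
  | zero => rw [map_zero]; exact S.zero_mem
  | tmul x y => exact hf x y
  | add a b ha hb => rw [map_add]; exact S.add_mem ha hb

end MemAux

section Stmt7

variable {H : Type} [Ring H] [HopfAlgebra k H]
variable {T : Type} [CommRing T] [HopfAlgebra k T]

/-- The product of the cocycle deformation `L = ᵅHᵅ⁻¹`: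
`x * y = α(x₁,y₁) x₂y₂ α⁻¹(x₃,y₃)`. -/
def mulL (α αinv : H ⊗[k] H →ₗ[k] k) : H ⊗[k] H →ₗ[k] H :=
  conv k (conv k (Algebra.linearMap k H ∘ₗ α) (LinearMap.mul' k H))
    (Algebra.linearMap k H ∘ₗ αinv)

/-- The generic cocycle of `L` for the trivial cocycle:
`σ_ε(x,y) = t_{x₁} t_{y₁} t⁻¹_{x₂*y₂}`. -/
def sigmaEpsL (D : TakData k H T) (α αinv : H ⊗[k] H →ₗ[k] k) : H ⊗[k] H →ₗ[k] T :=
  conv k D.tt (D.tinv ∘ₗ mulL k α αinv)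

/-- Its convolution inverse: `σ_ε⁻¹(x,y) = t_{x₁*y₁} t⁻¹_{x₂} t⁻¹_{y₂}`. -/
def sigmaEpsLInv (D : TakData k H T) (α αinv : H ⊗[k] H →ₗ[k] k) : H ⊗[k] H →ₗ[k] T :=
  conv k (D.t ∘ₗ mulL k α αinv) D.tinvtinv

lemma tinv_comp_mulL (D : TakData k H T) (α αinv : H ⊗[k] H →ₗ[k] k) :
    D.tinv ∘ₗ mulL k α αinv
      = conv k (Algebra.linearMap k T ∘ₗ α)
          (conv k D.tinvMul (Algebra.linearMap k T ∘ₗ αinv)) := by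
  rw [mulL, conv_assoc, conv_iota_left, conv_iota_right, conv_iota_right, conv_iota_left,
    TakData.tinvMul]
  rfl

lemma t_comp_mulL (D : TakData k H T) (α αinv : H ⊗[k] H →ₗ[k] k) :
    D.t ∘ₗ mulL k α αinv
      = conv k (Algebra.linearMap k T ∘ₗ α)
          (conv k D.tMul (Algebra.linearMap k T ∘ₗ αinv)) := by
  rw [mulL, conv_assoc, conv_iota_left, conv_iota_right, conv_iota_right, conv_iota_left,
    TakData.tMul]
  rfl

/-- With `L = ᵅHᵅ⁻¹` the cocycle deformation of `H`, one has
`σ_α(x,y) = σ_ε(x₁,y₁) α(x₂,y₂)` and `σ_α⁻¹(x,y) = α⁻¹(x₁,y₁) σ_ε⁻¹(x₂,y₂)` inside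
`S(t_H)_Θ`, and consequently the generic base algebras coincide: `B_H^α = B_L^ε`. -/
theorem genBase_cocycle_deformation
    (D : TakData k H T) (α αinv : H ⊗[k] H →ₗ[k] k)
    (hcoc : IsCocycle k α) (hinv : IsConvInverse k α αinv) :
    D.sigma α = conv k (sigmaEpsL k D α αinv) (Algebra.linearMap k T ∘ₗ α) ∧
    D.sigmaInv αinv
      = conv k (Algebra.linearMap k T ∘ₗ αinv) (sigmaEpsLInv k D α αinv) ∧
    D.genBase α αinv
      = Algebra.adjoin k
          (Set.range (fun p : H × H => sigmaEpsL k D α αinv (p.1 ⊗ₜ[k] p.2)) ∪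
            Set.range (fun p : H × H => sigmaEpsLInv k D α αinv (p.1 ⊗ₜ[k] p.2))) := by
  have e1 : D.sigma α = conv k (sigmaEpsL k D α αinv) (Algebra.linearMap k T ∘ₗ α) := by
    rw [sigmaEpsL, tinv_comp_mulL, conv_assoc, conv_assoc, conv_assoc, iota_conv_iota,
      hinv.2, iota_convOne, conv_one, TakData.sigma, conv_assoc]
  have e2 : D.sigmaInv αinv
      = conv k (Algebra.linearMap k T ∘ₗ αinv) (sigmaEpsLInv k D α αinv) := by
    rw [sigmaEpsLInv, t_comp_mulL, ← conv_assoc, ← conv_assoc, iota_conv_iota,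
      hinv.2, iota_convOne, one_conv, TakData.sigmaInv]
  have e1' : sigmaEpsL k D α αinv = conv k (D.sigma α) (Algebra.linearMap k T ∘ₗ αinv) := by
    rw [e1, conv_assoc, iota_conv_iota, hinv.1, iota_convOne, conv_one]
  have e2' : sigmaEpsLInv k D α αinv
      = conv k (Algebra.linearMap k T ∘ₗ α) (D.sigmaInv αinv) := by
    rw [e2, ← conv_assoc, iota_conv_iota, hinv.1, iota_convOne, one_conv]
  refine ⟨e1, e2, ?_⟩
  apply le_antisymm
  · apply Algebra.adjoin_le
    apply Set.union_subset
    · rw [Set.range_subset_iff]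
      intro p
      rw [e1, conv_iota_right]
      simp only [LinearMap.comp_apply]
      apply apply_mem_of_tmul_mem
      intro x y
      exact Algebra.subset_adjoin (Set.mem_union_left _ ⟨(x, y), rfl⟩)
    · rw [Set.range_subset_iff]
      intro p
      rw [e2, conv_iota_left]
      simp only [LinearMap.comp_apply]
      apply apply_mem_of_tmul_mem
      intro x y
      exact Algebra.subset_adjoin (Set.mem_union_right _ ⟨(x, y), rfl⟩)
  · apply Algebra.adjoin_le
    apply Set.union_subset
    · rw [Set.range_subset_iff]
      intro p
      rw [e1', conv_iota_right]
      simp only [LinearMap.comp_apply]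
      apply apply_mem_of_tmul_mem
      intro x y
      exact Algebra.subset_adjoin (Set.mem_union_left _ ⟨(x, y), rfl⟩)
    · rw [Set.range_subset_iff]
      intro p
      rw [e2', conv_iota_left]
      simp only [LinearMap.comp_apply]
      apply apply_mem_of_tmul_mem
      intro x y
      exact Algebra.subset_adjoin (Set.mem_union_right _ ⟨(x, y), rfl⟩)

end Stmt7
end
end

section
/- Let H be a Hopf algebra. For all x ∈ H, the element t⁻¹_{S(x₁)} t⁻¹_{x₂} of S(t_H)_Θ belongs to the generic base algebra B_H; explicitly, t⁻¹_{S(x₁)} t⁻¹_{x₂} = σ⁻¹(S(x₁), x₂) · t⁻¹_1. -/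
/-!
Since the antipode is an anti-coalgebra map, `Δ(S x₁) = S x₂ ⊗ S x₁`, hence
`σ⁻¹(S x₁, x₂) = t_{S(x₂) x₃} t⁻¹_{S(x₁)} t⁻¹_{x₄}`. The antipode axiom collapses `S(x₂) x₃`
to `ε(x₂) 1`, leaving `t_1 t⁻¹_{S(x₁)} t⁻¹_{x₂}`, and `t_1 t⁻¹_1 = 1` because `t⁻¹` is the
convolution inverse of `t`. Membership in `B_H` follows since `t⁻¹_1 = σ⁻¹(1, 1)`.
-/

open TensorProduct

noncomputable section

variable (k : Type) [Field k]

variable (C : Type) [AddCommGroup C] [Module k C] [Coalgebra k C]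

open Coalgebra HopfAlgebra WithConv

namespace HopfAlgebra

variable {R H : Type*} [CommSemiring R] [Semiring H] [HopfAlgebra R H]

theorem comul_comp_antipode :
    comul ∘ₗ antipode R =
      map (antipode R) (antipode R) ∘ₗ (TensorProduct.comm R H H).toLinearMap ∘ₗ comul := by
  let i₁ : H →ₐ[R] H ⊗[R] H := Algebra.TensorProduct.includeLeft
  let i₂ : H →ₐ[R] H ⊗[R] H := Algebra.TensorProduct.includeRight
  have comul_eq : toConv (comul (R := R) (A := H)) =
      toConv i₁.toLinearMap * toConv i₂.toLinearMap := by
    ext x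
    simp [(ℛ R x).convMul_apply, i₁, i₂, ← (ℛ R x).eq]
  have swap_eq : toConv (map (antipode R) (antipode R) ∘ₗ
        (TensorProduct.comm R H H).toLinearMap ∘ₗ comul (R := R) (A := H)) =
      toConv (i₂.toLinearMap ∘ₗ antipode R) * toConv (i₁.toLinearMap ∘ₗ antipode R) := by
    ext x
    simp [(ℛ R x).convMul_apply, i₁, i₂, ← (ℛ R x).eq]
  have inv_mul (i : H →ₐ[R] H ⊗[R] H) :
      toConv (i.toLinearMap ∘ₗ antipode R) * toConv i.toLinearMap = 1 := by
    have h := LinearMap.algHom_comp_convMul_distrib i (toConv (antipode R)) (toConv LinearMap.id)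
    rw [LinearMap.antipode_mul_id, LinearMap.comp_id] at h
    apply ofConv_injective
    rw [← h]
    ext x
    simp
  -- `δ = i₁ * i₂` has the left inverse `(i₂ ∘ S) * (i₁ ∘ S)` and the right inverse `δ ∘ S`.
  refine toConv_injective (left_inv_eq_right_inv ?_ LinearMap.comul_right_inv).symm
  rw [swap_eq, comul_eq, mul_assoc, ← mul_assoc _ (toConv i₁.toLinearMap), inv_mul, one_mul,
    inv_mul]

variable {A ι : Type*} [Semiring A] [Algebra R A]

@[simps]
protected def _root_.Coalgebra.Repr.antipode {a : H} (r : Repr R a ι) :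
    Repr R (antipode R a) ι where
  index := r.index
  left i := antipode R (r.right i)
  right i := antipode R (r.left i)
  eq := by
    rw [← LinearMap.comp_apply (comul (R := R)), comul_comp_antipode, LinearMap.comp_apply,
      LinearMap.comp_apply, ← r.eq]
    simp

/-- `q ⊗ y ↦ f (S q * y₁) * g y₂`. -/
def antipodeTwist (f g : H →ₗ[R] A) : H ⊗[R] H →ₗ[R] A :=
  LinearMap.mul' R A ∘ₗ map (f ∘ₗ LinearMap.mul' R H ∘ₗ (antipode R).rTensor H) g ∘ₗ
    (TensorProduct.assoc R H H H).symm.toLinearMap ∘ₗ comul.lTensor H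

variable (f g : H →ₗ[R] A)

theorem antipodeTwist_tmul (q : H) {y : H} (r : Repr R y ι) :
    antipodeTwist f g (q ⊗ₜ y) = ∑ i ∈ r.index, f (antipode R q * r.left i) * g (r.right i) := by
  simp [antipodeTwist, ← r.eq, tmul_sum]

theorem antipodeTwist_comul (y : H) : antipodeTwist f g (comul y) = f 1 * g y := by
  have h : antipodeTwist f g ∘ₗ comul =
      LinearMap.mul' R A ∘ₗ map (f ∘ₗ Algebra.linearMap R H ∘ₗ counit) g ∘ₗ comul := by
    simp only [antipodeTwist, LinearMap.comp_assoc, coassoc_symm]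
    rw [← LinearMap.comp_assoc _ (comul.rTensor H), LinearMap.map_comp_rTensor,
      LinearMap.comp_assoc, LinearMap.comp_assoc, mul_antipode_rTensor_comul]
  rw [← LinearMap.comp_apply (antipodeTwist f g), h]
  conv_rhs => rw [← sum_counit_smul (ℛ R y)]
  rw [LinearMap.comp_apply, LinearMap.comp_apply, ← (ℛ R y).eq]
  simp [Finset.mul_sum, Algebra.algebraMap_eq_smul_one]

end HopfAlgebra

section Convolution

variable {k} {C A : Type} [AddCommGroup C] [Module k C] [Coalgebra k C] [Ring A] [Algebra k A]

theorem conv_apply_repr (f g : C →ₗ[k] A) {x : C} {ι : Type*} (r : Repr k x ι) :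
    conv k f g x = ∑ i ∈ r.index, f (r.left i) * g (r.right i) :=
  r.convMul_apply (toConv f) (toConv g)

end Convolution

namespace TakData

variable {k} {H : Type} [Ring H] [HopfAlgebra k H] {T : Type} [CommRing T] [HopfAlgebra k T]
  (D : TakData k H T)

theorem t_one_mul_tinv_one : D.t 1 * D.tinv 1 = 1 := by
  simpa [conv, convOne, Algebra.TensorProduct.one_def] using LinearMap.congr_fun D.conv_t_tinv 1

theorem sigmaEpsInv_tmul {u v : H} {ι κ : Type*} (ru : Repr k u ι) (rv : Repr k v κ) :
    D.sigmaEpsInv (u ⊗ₜ v) = ∑ p ∈ ru.index ×ˢ rv.index,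
      D.t (ru.left p.1 * rv.left p.2) * (D.tinv (ru.right p.1) * D.tinv (rv.right p.2)) := by
  simp [sigmaEpsInv, conv_apply_repr _ _ (ru.tmul rv), tMul, tinvtinv]

theorem sigmaEpsInv_one_tmul_one : D.sigmaEpsInv (1 ⊗ₜ 1) = D.tinv 1 := by
  simp only [sigmaEpsInv, conv, LinearMap.comp_apply, ← Algebra.TensorProduct.one_def,
    Bialgebra.comul_one]
  simp [Algebra.TensorProduct.one_def, tMul, tinvtinv, ← mul_assoc, t_one_mul_tinv_one]

theorem sigmaEpsInv_mem_B (z : H ⊗[k] H) : D.sigmaEpsInv z ∈ D.B := by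
  induction z using TensorProduct.induction_on with
  | zero => simp
  | tmul u v => exact Algebra.subset_adjoin (Set.mem_union_right _ ⟨(u, v), rfl⟩)
  | add a b ha hb => simpa using add_mem ha hb

theorem tinv_one_mem_B : D.tinv 1 ∈ D.B :=
  D.sigmaEpsInv_one_tmul_one ▸ D.sigmaEpsInv_mem_B _

theorem sigmaEpsInv_antipode_comul (x : H) :
    D.sigmaEpsInv (map (antipode k) LinearMap.id (comul x)) =
      D.t 1 * conv k (D.tinv ∘ₗ antipode k) D.tinv x := by
  set r := ℛ k x
  set a := fun i => ℛ k (r.left i)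
  set b := fun i => ℛ k (r.right i)
  have coassoc := congrArg
    (LinearMap.mul' k T ∘ₗ map (D.tinv ∘ₗ antipode k) (antipodeTwist D.t D.tinv))
    (sum_tmul_tmul_eq r a b)
  simp only [map_sum, LinearMap.comp_apply, map_tmul, LinearMap.mul'_apply] at coassoc
  calc D.sigmaEpsInv (map (antipode k) LinearMap.id (comul x))
      = ∑ i ∈ r.index, D.sigmaEpsInv (antipode k (r.left i) ⊗ₜ r.right i) := by
        rw [← r.eq]; simp
    _ = ∑ i ∈ r.index, ∑ j ∈ (a i).index, D.tinv (antipode k ((a i).left j)) *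
          antipodeTwist D.t D.tinv ((a i).right j ⊗ₜ r.right i) := by
        refine Finset.sum_congr rfl fun i _ => ?_
        rw [sigmaEpsInv_tmul _ (a i).antipode (b i), Finset.sum_product]
        refine Finset.sum_congr rfl fun j _ => ?_
        rw [antipodeTwist_tmul _ _ _ (b i), Finset.mul_sum]
        refine Finset.sum_congr rfl fun m _ => ?_
        simp only [Repr.antipode_left, Repr.antipode_right]
        ring
    _ = ∑ i ∈ r.index, D.tinv (antipode k (r.left i)) *
          antipodeTwist D.t D.tinv (comul (r.right i)) := by
        rw [coassoc]
        refine Finset.sum_congr rfl fun i _ => ?_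
        rw [← Finset.mul_sum, ← map_sum, (b i).eq]
    _ = D.t 1 * conv k (D.tinv ∘ₗ antipode k) D.tinv x := by
        simp only [antipodeTwist_comul, conv_apply_repr _ _ r, Finset.mul_sum, LinearMap.comp_apply]
        exact Finset.sum_congr rfl fun i _ => by ring

end TakData

/-- For all `x ∈ H`, the element `t⁻¹_{S(x₁)} t⁻¹_{x₂}` of `S(t_H)_Θ`
equals `σ⁻¹(S(x₁), x₂) · t⁻¹_1` and in particular belongs to the generic base algebra
`B_H`. -/
theorem tinv_antipode_tinv_mem_B
    {H : Type} [Ring H] [HopfAlgebra k H]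
    {T : Type} [CommRing T] [HopfAlgebra k T] (D : TakData k H T) :
    ∀ x : H,
      conv k (D.tinv ∘ₗ HopfAlgebra.antipode (R := k)) D.tinv x
        = D.sigmaEpsInv
            (TensorProduct.map (HopfAlgebra.antipode (R := k)) LinearMap.id
              (Coalgebra.comul x)) * D.tinv 1 ∧
      conv k (D.tinv ∘ₗ HopfAlgebra.antipode (R := k)) D.tinv x ∈ D.B := by
  intro x
  have key : conv k (D.tinv ∘ₗ antipode k) D.tinv x =
      D.sigmaEpsInv (map (antipode k) LinearMap.id (comul x)) * D.tinv 1 := by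
    rw [D.sigmaEpsInv_antipode_comul, mul_right_comm, D.t_one_mul_tinv_one, one_mul]
  exact ⟨key, key ▸ mul_mem (D.sigmaEpsInv_mem_B _) D.tinv_one_mem_B⟩
end
end
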